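/- arXiv:1910.05111 — 5 statements merged into one kernel-verified Lean document; each statement's English description precedes it below -/
import Mathlib

section
/- If {φⱼ} is a sequence of holomorphic functions mapping the open unit disk 𝔻 to itself such that ∑ⱼ supₓ∈𝔻 |φⱼ(z) − z| < ∞, then the sequence of inner compositions Φₙ(z) = φ₁(φ₂(...φₙ(z))) converges uniformly on compact subsets of 𝔻 to a holomorphic function Φ : 𝔻 → 𝔻̄ (closure of 𝔻). -/
/-!
A holomorphic self-map `f` of the disk satisfies `‖f w - f z‖ ≤ 2 / (1 - ‖z‖) * ‖w - z‖`
(Cauchy's estimate on the disk of radius `1 - ‖z‖` about `z`, and the trivial bound `2` for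
distant `w`). Applied to `f = Φₙ` and `w = φₙ z` this bounds `‖Φₙ₊₁ z - Φₙ z‖` by
`2 / (1 - r) * cₙ` on `‖z‖ < r`, so the telescoping series `∑ (Φₙ₊₁ - Φₙ)` converges uniformly
there by the Weierstrass M-test. The limit is holomorphic as a locally uniform limit of
holomorphic maps, and it takes values in the closed disk as a pointwise limit of points of the
open one.
-/

open Complex Metric Filter Topology

/-- Inner composition: `innerComp φ n = φ 0 ∘ φ 1 ∘ ... ∘ φ (n-1)`,
built recursively by `Φ_{n+1}(z) = Φ_n (φ_n z)`. -/
def innerComp (φ : ℕ → ℂ → ℂ) : ℕ → ℂ → ℂ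
  | 0 => id
  | (n + 1) => fun z => innerComp φ n (φ n z)

lemma dist_lt_two_of_mem_ball_zero_one {E : Type*} [SeminormedAddCommGroup E] {a b : E}
    (ha : a ∈ ball (0 : E) 1) (hb : b ∈ ball (0 : E) 1) : dist a b < 2 := by
  rw [mem_ball] at ha hb
  linarith [dist_triangle_right a b 0]

theorem Complex.norm_sub_le_of_mapsTo_unitBall {f : ℂ → ℂ}
    (hd : DifferentiableOn ℂ f (ball 0 1)) (hf : Set.MapsTo f (ball 0 1) (ball 0 1))
    {z w : ℂ} (hz : z ∈ ball (0 : ℂ) 1) (hw : w ∈ ball (0 : ℂ) 1) :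
    ‖f w - f z‖ ≤ 2 / (1 - ‖z‖) * ‖w - z‖ := by
  have hR : 0 < 1 - ‖z‖ := by simpa using hz
  have hsub : ball z (1 - ‖z‖) ⊆ ball 0 1 := ball_subset_ball' (by simp)
  rcases lt_or_ge ‖w - z‖ (1 - ‖z‖) with hnear | hfar
  · have hmaps : Set.MapsTo f (ball z (1 - ‖z‖)) (closedBall (f z) 2) := fun x hx =>
      (dist_lt_two_of_mem_ball_zero_one (hf (hsub hx)) (hf hz)).le
    simpa [dist_eq_norm] using
      dist_le_div_mul_dist_of_mapsTo_ball (hd.mono hsub) hmaps (by simpa [dist_eq_norm] using hnear)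
  · calc ‖f w - f z‖ ≤ 2 := by
          simpa [dist_eq_norm] using (dist_lt_two_of_mem_ball_zero_one (hf hw) (hf hz)).le
      _ ≤ 2 / (1 - ‖z‖) * ‖w - z‖ := by
          rw [div_mul_eq_mul_div, le_div_iff₀ hR]
          linarith

theorem tendstoUniformlyOn_of_norm_succ_sub_le_summable {α F : Type*} [NormedAddCommGroup F]
    [CompleteSpace F] {f : ℕ → α → F} {u : ℕ → ℝ} (hu : Summable u) {s : Set α}
    (h : ∀ n, ∀ x ∈ s, ‖f (n + 1) x - f n x‖ ≤ u n) :
    TendstoUniformlyOn f (fun x => f 0 x + ∑' n, (f (n + 1) x - f n x)) atTop s := by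
  have hsum := (tendstoUniformlyOn_tsum_nat hu h).add
    (tendstoUniformlyOn_iff_tendsto.2 (tendsto_diag_uniformity (fun q : ℕ × α => f 0 q.2) _) :
      TendstoUniformlyOn (fun _ => f 0) (f 0) atTop s)
  refine hsum.congr (Eventually.of_forall fun N x _ => ?_) |>.congr_right fun x _ => add_comm _ _
  simp only [Pi.add_apply, Finset.sum_range_sub (fun n => f n x), sub_add_cancel]

namespace innerComp

variable {φ : ℕ → ℂ → ℂ}

theorem mapsTo {s : Set ℂ} (hmaps : ∀ j, Set.MapsTo (φ j) s s) (n : ℕ) :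
    Set.MapsTo (innerComp φ n) s s := by
  induction n with
  | zero => exact Set.mapsTo_id s
  | succ n ih => exact ih.comp (hmaps n)

theorem differentiableOn {s : Set ℂ} (hmaps : ∀ j, Set.MapsTo (φ j) s s)
    (hdiff : ∀ j, DifferentiableOn ℂ (φ j) s) (n : ℕ) :
    DifferentiableOn ℂ (innerComp φ n) s := by
  induction n with
  | zero => exact differentiableOn_id
  | succ n ih => exact ih.comp (hdiff n) (hmaps n)

theorem norm_succ_sub_le (hmaps : ∀ j, Set.MapsTo (φ j) (ball (0 : ℂ) 1) (ball (0 : ℂ) 1))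
    (hdiff : ∀ j, DifferentiableOn ℂ (φ j) (ball (0 : ℂ) 1)) {c : ℕ → ℝ}
    (hb : ∀ j, ∀ z ∈ ball (0 : ℂ) 1, ‖φ j z - z‖ ≤ c j)
    {z : ℂ} (hz : z ∈ ball (0 : ℂ) 1) (n : ℕ) :
    ‖innerComp φ (n + 1) z - innerComp φ n z‖ ≤ 2 / (1 - ‖z‖) * c n := by
  have hR : 0 < 1 - ‖z‖ := by simpa using hz
  calc ‖innerComp φ n (φ n z) - innerComp φ n z‖
      ≤ 2 / (1 - ‖z‖) * ‖φ n z - z‖ :=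
        norm_sub_le_of_mapsTo_unitBall (differentiableOn hmaps hdiff n) (mapsTo hmaps n) hz
          (hmaps n hz)
    _ ≤ 2 / (1 - ‖z‖) * c n := by gcongr; exact hb n z hz

theorem tendstoUniformlyOn_ball (hmaps : ∀ j, Set.MapsTo (φ j) (ball (0 : ℂ) 1) (ball (0 : ℂ) 1))
    (hdiff : ∀ j, DifferentiableOn ℂ (φ j) (ball (0 : ℂ) 1)) {c : ℕ → ℝ}
    (hb : ∀ j, ∀ z ∈ ball (0 : ℂ) 1, ‖φ j z - z‖ ≤ c j)
    (hc : Summable c) {r : ℝ} (hr : r < 1) :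
    TendstoUniformlyOn (innerComp φ)
      (fun z => innerComp φ 0 z + ∑' n, (innerComp φ (n + 1) z - innerComp φ n z))
      atTop (ball (0 : ℂ) r) := by
  have hc0 : ∀ j, 0 ≤ c j := fun j => (norm_nonneg _).trans (hb j 0 (mem_ball_self one_pos))
  refine tendstoUniformlyOn_of_norm_succ_sub_le_summable (hc.mul_left (2 / (1 - r)))
    fun n z hz => ?_
  have hzr : ‖z‖ < r := by simpa using hz
  calc _ ≤ 2 / (1 - ‖z‖) * c n :=
        norm_succ_sub_le hmaps hdiff hb (ball_subset_ball hr.le hz) n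
    _ ≤ 2 / (1 - r) * c n := by
        have := hc0 n
        gcongr

end innerComp

theorem stmt_0 (φ : ℕ → ℂ → ℂ)
    (hmaps : ∀ j, Set.MapsTo (φ j) (ball (0 : ℂ) 1) (ball (0 : ℂ) 1))
    (hdiff : ∀ j, DifferentiableOn ℂ (φ j) (ball (0 : ℂ) 1))
    (c : ℕ → ℝ) (hc : Summable c)
    (hb : ∀ j, ∀ z ∈ ball (0 : ℂ) 1, ‖φ j z - z‖ ≤ c j) :
    ∃ Φ : ℂ → ℂ,
      TendstoLocallyUniformlyOn (fun n => innerComp φ n) Φ atTop (ball (0 : ℂ) 1) ∧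
      DifferentiableOn ℂ Φ (ball (0 : ℂ) 1) ∧
      Set.MapsTo Φ (ball (0 : ℂ) 1) (closedBall (0 : ℂ) 1) := by
  set Φ := fun z => innerComp φ 0 z + ∑' n, (innerComp φ (n + 1) z - innerComp φ n z)
  have hlim : TendstoLocallyUniformlyOn (innerComp φ) Φ atTop (ball (0 : ℂ) 1) := by
    refine tendstoLocallyUniformlyOn_of_forall_exists_nhds fun x hx => ?_
    obtain ⟨r, hxr, hr⟩ := exists_between (mem_ball_zero_iff.1 hx)
    exact ⟨ball 0 r, mem_nhdsWithin_of_mem_nhds (isOpen_ball.mem_nhds (by simpa using hxr)),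
      innerComp.tendstoUniformlyOn_ball hmaps hdiff hb hc hr⟩
  refine ⟨Φ, hlim, hlim.differentiableOn (.of_forall (innerComp.differentiableOn hmaps hdiff))
    isOpen_ball, fun z hz => ?_⟩
  exact isClosed_closedBall.mem_of_tendsto (hlim.tendsto_at hz)
    (.of_forall fun n => ball_subset_closedBall (innerComp.mapsTo hmaps n hz))
end

section
/- Let {φⱼ} be holomorphic functions mapping an open set G ⊆ ℂ to itself such that for every compact disk K ⊂ G, ∑ⱼ supₓ∈K |φⱼ(z) − z| < ∞. Then the inner compositions Φₙ(z) = φ₁(φ₂(...φₙ(z))) converge uniformly on compact subsets of G, and the limit Φ is holomorphic on G with values in the closure of G. -/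
/-!
Write `Φₘ = Φ_N ∘ T` where `T = φ_N ∘ ⋯ ∘ φ_{m-1}`. On a closed thickening of a compact `K ⊆ G` the
bounds `‖φⱼ - id‖ ≤ cⱼ` are summable, so every tail composition started at index `n` moves points by at
most `∑_{j ≥ n} cⱼ`. For `N` large, all `Φₘ` with `m ≥ N` are therefore bounded near `K` by the bound of
the single map `Φ_N`, hence uniformly Lipschitz near `K` by the Schwarz lemma. Since
`Φ_{m'}(z) = Φₘ(u)` with `|u - z| ≤ ∑_{j ≥ m} cⱼ`, the `Φₘ` are uniformly Cauchy on `K`. The limit is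
holomorphic by Weierstrass' theorem.
-/

open Complex Metric Filter Topology

open Set Finset

section Composition

variable {φ : ℕ → ℂ → ℂ}

theorem innerComp_add (n k : ℕ) (z : ℂ) :
    innerComp φ (n + k) z = innerComp φ n (innerComp (fun j => φ (j + n)) k z) := by
  induction k generalizing z with
  | zero => rfl
  | succ k ih =>
    change innerComp φ (n + k) (φ (n + k) z) = innerComp φ n (innerComp _ k (φ (k + n) z))
    rw [ih, Nat.add_comm n k]

theorem innerComp_mapsTo {G : Set ℂ} (hmaps : ∀ j, MapsTo (φ j) G G) (n : ℕ) :
    MapsTo (innerComp φ n) G G := by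
  induction n with
  | zero => exact mapsTo_id G
  | succ n ih => exact ih.comp (hmaps n)

theorem innerComp_differentiableOn {G : Set ℂ} (hmaps : ∀ j, MapsTo (φ j) G G)
    (hdiff : ∀ j, DifferentiableOn ℂ (φ j) G) (n : ℕ) :
    DifferentiableOn ℂ (innerComp φ n) G := by
  induction n with
  | zero => exact differentiableOn_id
  | succ n ih => exact ih.comp (hdiff n) (hmaps n)

variable {K : Set ℂ} {c : ℕ → ℝ}

theorem dist_innerComp_le_sum (hc : ∀ j, 0 ≤ c j) (hbd : ∀ j, ∀ z ∈ K, ‖φ j z - z‖ ≤ c j)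
    (k : ℕ) (w : ℂ) (hw : closedBall w (∑ j ∈ range k, c j) ⊆ K) :
    dist (innerComp φ k w) w ≤ ∑ j ∈ range k, c j := by
  induction k generalizing w with
  | zero => simp [innerComp]
  | succ k ih =>
    rw [sum_range_succ] at hw ⊢
    have hstep : dist (φ k w) w ≤ c k := by
      rw [dist_eq_norm]
      exact hbd k w (hw (mem_closedBall_self (add_nonneg (sum_nonneg fun j _ => hc j) (hc k))))
    have hrest := ih (φ k w) ((closedBall_subset_closedBall' (by linarith)).trans hw)
    calc dist (innerComp φ k (φ k w)) w ≤ dist (innerComp φ k (φ k w)) (φ k w) + dist (φ k w) w :=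
          dist_triangle _ _ _
      _ ≤ ∑ j ∈ range k, c j + c k := add_le_add hrest hstep

theorem dist_innerComp_le_tsum (hc : ∀ j, 0 ≤ c j) (hcs : Summable c)
    (hbd : ∀ j, ∀ z ∈ K, ‖φ j z - z‖ ≤ c j) {w : ℂ} (hw : closedBall w (∑' j, c j) ⊆ K) (k : ℕ) :
    dist (innerComp φ k w) w ≤ ∑' j, c j :=
  have hle := hcs.sum_le_tsum (range k) fun j _ => hc j
  (dist_innerComp_le_sum hc hbd k w ((closedBall_subset_closedBall hle).trans hw)).trans hle

end Composition

theorem exists_summable_bound_of_isCompact {G : Set ℂ} (hG : IsOpen G) {φ : ℕ → ℂ → ℂ}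
    (hsum : ∀ (z₀ : ℂ) (r : ℝ), closedBall z₀ r ⊆ G →
      ∃ c : ℕ → ℝ, Summable c ∧ ∀ j, ∀ z ∈ closedBall z₀ r, ‖φ j z - z‖ ≤ c j)
    {K : Set ℂ} (hK : IsCompact K) (hKG : K ⊆ G) :
    ∃ c : ℕ → ℝ, Summable c ∧ (∀ j, 0 ≤ c j) ∧ ∀ j, ∀ z ∈ K, ‖φ j z - z‖ ≤ c j := by
  have hr : ∀ x : K, ∃ r, 0 < r ∧ closedBall (x : ℂ) r ⊆ G := fun x =>
    nhds_basis_closedBall.mem_iff.1 (hG.mem_nhds (hKG x.2))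
  choose r hr0 hrG using hr
  choose c hcs hcb using fun x : K => hsum x (r x) (hrG x)
  obtain ⟨t, ht⟩ := hK.elim_finite_subcover (fun x : K => ball (x : ℂ) (r x))
    (fun _ => isOpen_ball) fun z hz => mem_iUnion.2 ⟨⟨z, hz⟩, mem_ball_self (hr0 _)⟩
  refine ⟨fun j => ∑ x ∈ t, |c x j|, summable_sum fun x _ => (hcs x).abs,
    fun j => sum_nonneg fun x _ => abs_nonneg _, fun j z hz => ?_⟩
  obtain ⟨x, hxt, hxz⟩ := mem_iUnion₂.1 (ht hz)
  calc ‖φ j z - z‖ ≤ c x j := hcb x j z (ball_subset_closedBall hxz)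
    _ ≤ |c x j| := le_abs_self _
    _ ≤ ∑ x ∈ t, |c x j| := single_le_sum (f := fun x => |c x j|) (fun _ _ => abs_nonneg _) hxt

theorem dist_le_of_norm_le_of_differentiableOn_ball {E : Type*} [NormedAddCommGroup E]
    [NormedSpace ℂ E] {f : ℂ → E} {z u : ℂ} {r B : ℝ} (hf : DifferentiableOn ℂ f (ball z r))
    (hB : ∀ w ∈ ball z r, ‖f w‖ ≤ B) (hu : u ∈ ball z r) :
    dist (f u) (f z) ≤ 2 * B / r * dist u z := by
  have hz : z ∈ ball z r := mem_ball_self (pos_of_mem_ball hu)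
  refine Complex.dist_le_div_mul_dist_of_mapsTo_ball hf (fun w hw => ?_) hu
  rw [mem_closedBall]
  linarith [dist_le_norm_add_norm (f w) (f z), hB w hw, hB z hz]

theorem uniformCauchySeqOn_of_dist_le {α β : Type*} [PseudoMetricSpace β] {F : ℕ → α → β}
    {s : Set α} {b : ℕ → ℝ} (hb : Tendsto b atTop (𝓝 0)) (N : ℕ)
    (h : ∀ m ≥ N, ∀ m' ≥ m, ∀ x ∈ s, dist (F m' x) (F m x) ≤ b m) :
    UniformCauchySeqOn F atTop s := by
  rw [Metric.uniformCauchySeqOn_iff]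
  intro ε hε
  obtain ⟨M, hM⟩ := eventually_atTop.1 ((hb.eventually (gt_mem_nhds hε)).and (eventually_ge_atTop N))
  refine ⟨M, fun m hm n hn x hx => ?_⟩
  rcases le_total m n with hmn | hnm
  · rw [dist_comm]
    exact (h m (hM m hm).2 n hmn x hx).trans_lt (hM m hm).1
  · exact (h n (hM n hn).2 m hnm x hx).trans_lt (hM n hn).1

section Convergence

variable {G : Set ℂ} {φ : ℕ → ℂ → ℂ}

theorem dist_innerComp_le_of_cthickening (hmaps : ∀ j, MapsTo (φ j) G G)
    (hdiff : ∀ j, DifferentiableOn ℂ (φ j) G) {K : Set ℂ} {δ B : ℝ} {c : ℕ → ℝ} {N : ℕ}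
    (hKG : cthickening δ K ⊆ G) (hc : ∀ j, 0 ≤ c j) (hcs : Summable c)
    (hbd : ∀ j, ∀ z ∈ cthickening δ K, ‖φ j z - z‖ ≤ c j)
    (hN : ∀ n ≥ N, ∑' j, c (j + n) < δ / 2) (hB : ∀ w ∈ cthickening δ K, ‖innerComp φ N w‖ ≤ B)
    {m m' : ℕ} (hm : N ≤ m) (hm' : m ≤ m') {z : ℂ} (hz : z ∈ K) :
    dist (innerComp φ m' z) (innerComp φ m z) ≤ 4 * B / δ * ∑' j, c (j + m) := by
  set t : ℕ → ℝ := fun n => ∑' j, c (j + n) with ht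
  have htail : ∀ n k w, closedBall w (t n) ⊆ cthickening δ K →
      dist (innerComp (fun j => φ (j + n)) k w) w ≤ t n := fun n k w hw =>
    dist_innerComp_le_tsum (fun j => hc _) ((summable_nat_add_iff n).2 hcs) (fun j => hbd _) hw k
  have hnear : ∀ n ≥ N, ∀ w ∈ ball z (δ / 2), closedBall w (t n) ⊆ cthickening δ K :=
    fun n hn w hw => (closedBall_subset_closedBall'
      (by linarith [hN n hn, mem_ball.1 hw])).trans (closedBall_subset_cthickening hz δ)
  have hδ : 0 < δ / 2 := (tsum_nonneg fun j => hc _).trans_lt (hN N le_rfl)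
  -- `innerComp φ m` factors through `innerComp φ N`, which is bounded by `B` near `K`
  have hbound : ∀ w ∈ ball z (δ / 2), ‖innerComp φ m w‖ ≤ B := by
    intro w hw
    obtain ⟨k, rfl⟩ := Nat.exists_eq_add_of_le hm
    rw [innerComp_add]
    exact hB _ (hnear N le_rfl w hw (htail N k w (hnear N le_rfl w hw)))
  have hdiffm : DifferentiableOn ℂ (innerComp φ m) (ball z (δ / 2)) :=
    (innerComp_differentiableOn hmaps hdiff m).mono (ball_subset_closedBall.trans
      ((closedBall_subset_closedBall (by linarith)).trans
        ((closedBall_subset_cthickening hz δ).trans hKG)))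
  obtain ⟨k, rfl⟩ := Nat.exists_eq_add_of_le hm'
  set u := innerComp (fun j => φ (j + m)) k z
  have hu : dist u z ≤ t m := htail m k z (hnear m hm z (mem_ball_self hδ))
  have hB0 : 0 ≤ B := (norm_nonneg _).trans (hbound z (mem_ball_self hδ))
  rw [innerComp_add]
  calc dist (innerComp φ m u) (innerComp φ m z) ≤ 2 * B / (δ / 2) * dist u z :=
        dist_le_of_norm_le_of_differentiableOn_ball hdiffm hbound
          (mem_ball.2 (hu.trans_lt (hN m hm)))
    _ ≤ 2 * B / (δ / 2) * t m := by gcongr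
    _ = 4 * B / δ * t m := by ring

theorem innerComp_uniformCauchySeqOn (hG : IsOpen G) (hmaps : ∀ j, MapsTo (φ j) G G)
    (hdiff : ∀ j, DifferentiableOn ℂ (φ j) G)
    (hsum : ∀ (z₀ : ℂ) (r : ℝ), closedBall z₀ r ⊆ G →
      ∃ c : ℕ → ℝ, Summable c ∧ ∀ j, ∀ z ∈ closedBall z₀ r, ‖φ j z - z‖ ≤ c j)
    {K : Set ℂ} (hK : IsCompact K) (hKG : K ⊆ G) :
    UniformCauchySeqOn (innerComp φ) atTop K := by
  obtain ⟨δ, hδ, hδG⟩ := hK.exists_cthickening_subset_open hG hKG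
  have hK₂ : IsCompact (cthickening δ K) := hK.cthickening
  obtain ⟨c, hcs, hc, hbd⟩ := exists_summable_bound_of_isCompact hG hsum hK₂ hδG
  have ht : Tendsto (fun n => ∑' j, c (j + n)) atTop (𝓝 0) := tendsto_sum_nat_add c
  obtain ⟨N, hN⟩ := eventually_atTop.1 (ht.eventually (gt_mem_nhds (half_pos hδ)))
  obtain ⟨B, hB⟩ := hK₂.exists_bound_of_continuousOn
    ((innerComp_differentiableOn hmaps hdiff N).continuousOn.mono hδG)
  exact uniformCauchySeqOn_of_dist_le (by simpa using ht.const_mul (4 * B / δ)) N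
    fun m hm m' hm' z hz => dist_innerComp_le_of_cthickening hmaps hdiff hδG hc hcs hbd hN hB hm hm' hz

end Convergence

theorem stmt_2 (G : Set ℂ) (hG : IsOpen G) (φ : ℕ → ℂ → ℂ)
    (hmaps : ∀ j, Set.MapsTo (φ j) G G)
    (hdiff : ∀ j, DifferentiableOn ℂ (φ j) G)
    (hsum : ∀ (z₀ : ℂ) (r : ℝ), closedBall z₀ r ⊆ G →
      ∃ c : ℕ → ℝ, Summable c ∧ ∀ j, ∀ z ∈ closedBall z₀ r, ‖φ j z - z‖ ≤ c j) :
    ∃ Φ : ℂ → ℂ,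
      TendstoLocallyUniformlyOn (fun n => innerComp φ n) Φ atTop G ∧
      DifferentiableOn ℂ Φ G ∧
      Set.MapsTo Φ G (closure G) := by
  have hcauchy := fun K (hKG : K ⊆ G) hK => innerComp_uniformCauchySeqOn hG hmaps hdiff hsum hK hKG
  have hlim : ∀ z ∈ G, ∃ w, Tendsto (fun n => innerComp φ n z) atTop (𝓝 w) := fun z hz =>
    cauchySeq_tendsto_of_complete ((hcauchy {z} (singleton_subset_iff.2 hz)
      isCompact_singleton).cauchySeq (mem_singleton z))
  choose! Φ hΦ using hlim
  have hTLU : TendstoLocallyUniformlyOn (fun n => innerComp φ n) Φ atTop G :=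
    (tendstoLocallyUniformlyOn_iff_forall_isCompact hG).2 fun K hKG hK =>
      (hcauchy K hKG hK).tendstoUniformlyOn_of_tendsto fun z hz => hΦ z (hKG hz)
  exact ⟨Φ, hTLU, hTLU.differentiableOn
    (Eventually.of_forall (innerComp_differentiableOn hmaps hdiff)) hG,
    fun z hz => mem_closure_of_tendsto (hΦ z hz)
      (Eventually.of_forall fun n => innerComp_mapsTo hmaps n hz)⟩
end

section
/- Fix z with Re(z) > 0. The limit U(s,z) = limₙ Uₙ(s,z) of the inner compositions Uₙ(s,z) = Ω_{j=1}^n (w ↦ w + e^{(s−j)w}) applied to z exists, is an entire function of s, and satisfies the first-order difference equation U(s+1, z) − U(s, z) = e^{s·U(s,z)} for all s ∈ ℂ. -/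
open Complex Metric Filter Topology

/-- `Un n s z = f (s-1, f (s-2, ..., f (s-n, z)))` where `f s z = z + exp (s z)`. -/
noncomputable def Un : ℕ → ℂ → ℂ → ℂ
  | 0, _, z => z
  | (n + 1), s, z => Un n (s - 1) z + Complex.exp ((s - 1) * Un n (s - 1) z)

/-
For `Re s` very negative the perturbations `e^{(s-j)w}` are geometrically small on the disc
`|w - z| ≤ Re z / 2`, so orbits starting near `z` stay in that disc and move by at most
`driftBound z s`. Then each `Un n s` maps the disc `|w - z| < Re z / 4` into a disc of three times
the radius around `Un n s z`, and the Schwarz lemma makes it `3`-Lipschitz at `z`. Since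
`Un (n+1) s z = Un n s (z + e^{(s-n-1)z})`, the increments decay geometrically, uniformly on an
open region, so the limit exists and is holomorphic there. A general `s` is reduced to that region
through `U s = Un m s (U (s - m))`, and the difference equation is the defining recursion of `Un`
passed to the limit.
-/

lemma Un_add (n m : ℕ) (s w : ℂ) : Un (n + m) s w = Un m s (Un n (s - m) w) := by
  induction m generalizing s with
  | zero => simp [Un]
  | succ m ih =>
    rw [← add_assoc, Un, ih, Un, sub_sub, Nat.cast_succ, add_comm 1]

lemma Un_succ_add_one (n : ℕ) (s w : ℂ) :
    Un (n + 1) (s + 1) w = Un n s w + cexp (s * Un n s w) := by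
  simp [Un]

lemma Un_succ (n : ℕ) (s w : ℂ) : Un (n + 1) s w = Un n s (w + cexp ((s - (n + 1)) * w)) := by
  rw [add_comm n 1, Un_add]
  simp [Un, sub_sub]

lemma differentiable_Un (n : ℕ) : Differentiable ℂ fun p : ℂ × ℂ => Un n p.1 p.2 := by
  induction n with
  | zero => exact differentiable_snd
  | succ n ih =>
    have h : Differentiable ℂ fun p : ℂ × ℂ => Un n (p.1 - 1) p.2 :=
      ih.comp ((differentiable_fst.sub_const 1).prodMk differentiable_snd)
    exact h.add ((differentiable_fst.sub_const 1).mul h).cexp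

lemma differentiable_Un_right (n : ℕ) (s : ℂ) : Differentiable ℂ (Un n s) :=
  (differentiable_Un n).comp ((differentiable_const s).prodMk differentiable_id)

theorem tendstoUniformlyOn_of_dist_le_geometric {α E : Type*} [PseudoMetricSpace E]
    {F : ℕ → α → E} {f : α → E} {S : Set α} {C r : ℝ} (hr₀ : 0 ≤ r) (hr : r < 1)
    (hF : ∀ x ∈ S, ∀ n, dist (F n x) (F (n + 1) x) ≤ C * r ^ n)
    (hf : ∀ x ∈ S, Tendsto (F · x) atTop (𝓝 (f x))) :
    TendstoUniformlyOn F f atTop S := by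
  rw [Metric.tendstoUniformlyOn_iff]
  intro ε hε
  have hlim : Tendsto (fun n : ℕ => C * r ^ n / (1 - r)) atTop (𝓝 0) := by
    simpa using ((tendsto_pow_atTop_nhds_zero_of_lt_one hr₀ hr).const_mul C).div_const (1 - r)
  filter_upwards [hlim.eventually_lt_const hε] with n hn x hx
  rw [dist_comm]
  exact (dist_le_of_le_geometric_of_tendsto r C hr (hF x hx) (hf x hx) n).trans_lt hn

theorem norm_cexp_mul_le {a w : ℂ} {ρ : ℝ} (ha : a.re ≤ 0) (hw : ρ ≤ w.re) :
    ‖cexp (a * w)‖ ≤ Real.exp (|a.im| * ‖w‖ + a.re * ρ) := by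
  rw [norm_exp, mul_re, Real.exp_le_exp]
  have him : -(a.im * w.im) ≤ |a.im| * ‖w‖ :=
    (neg_le_abs _).trans ((abs_mul _ _).trans_le (by gcongr; exact abs_im_le_norm w))
  nlinarith [mul_le_mul_of_nonpos_left hw ha]

-- Bound for `‖exp (s * w)‖` on `closedBall z (z.re / 2)` when `s.re ≤ 0`.
noncomputable def expBound (z s : ℂ) : ℝ :=
  Real.exp (|s.im| * (‖z‖ + z.re / 2) + s.re * (z.re / 2))

noncomputable def decay (z : ℂ) : ℝ := Real.exp (-(z.re / 2))

-- `driftBound z s = ∑_{j ≥ 1} expBound z (s - j)`, bounding how far the orbit `Un n s w` moves.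
noncomputable def driftBound (z s : ℂ) : ℝ := expBound z s * decay z / (1 - decay z)

section

variable {z : ℂ}

lemma norm_cexp_mul_le_expBound {a w : ℂ} (ha : a.re ≤ 0) (hw : w ∈ closedBall z (z.re / 2)) :
    ‖cexp (a * w)‖ ≤ expBound z a := by
  rw [mem_closedBall, dist_eq] at hw
  have hre : z.re / 2 ≤ w.re := by
    have := (abs_le.1 ((abs_re_le_norm (w - z)).trans hw)).1
    rw [sub_re] at this
    linarith
  have hnorm : ‖w‖ ≤ ‖z‖ + z.re / 2 := by
    linarith [norm_le_norm_add_norm_sub' w z]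
  exact (norm_cexp_mul_le ha hre).trans (Real.exp_le_exp.2 (by gcongr))

lemma expBound_pos (s : ℂ) : 0 < expBound z s := Real.exp_pos _

lemma expBound_sub_natCast (s : ℂ) (n : ℕ) :
    expBound z (s - n) = expBound z s * decay z ^ n := by
  rw [expBound, expBound, decay, ← Real.exp_nat_mul, ← Real.exp_add]
  congr 1
  simp only [sub_im, natCast_im, sub_zero, sub_re, natCast_re]
  ring

lemma decay_pos : 0 < decay z := Real.exp_pos _

lemma decay_lt_one (hz : 0 < z.re) : decay z < 1 := by
  rw [decay, Real.exp_lt_one_iff]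
  linarith

lemma driftBound_nonneg (hz : 0 < z.re) (s : ℂ) : 0 ≤ driftBound z s :=
  div_nonneg (mul_pos (expBound_pos s) decay_pos).le (sub_pos.2 (decay_lt_one hz)).le

lemma driftBound_sub_natCast (s : ℂ) (n : ℕ) :
    driftBound z (s - n) = driftBound z s * decay z ^ n := by
  rw [driftBound, driftBound, expBound_sub_natCast]
  ring

lemma driftBound_sub_one_add (hz : 0 < z.re) (s : ℂ) :
    driftBound z (s - 1) + expBound z (s - 1) = driftBound z s := by
  have h := expBound_sub_natCast (z := z) s 1
  rw [Nat.cast_one, pow_one] at h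
  have : 1 - decay z ≠ 0 := (sub_pos.2 (decay_lt_one hz)).ne'
  rw [driftBound, driftBound, h]
  field_simp
  ring

theorem dist_Un_le_driftBound (hz : 0 < z.re) {s w : ℂ} (hs : s.re ≤ 1)
    (hD : driftBound z s ≤ z.re / 4) (hw : dist w z ≤ z.re / 4) (n : ℕ) :
    dist (Un n s w) w ≤ driftBound z s := by
  induction n generalizing s with
  | zero => simpa [Un] using driftBound_nonneg hz s
  | succ n ih =>
    have hrec := driftBound_sub_one_add hz s
    have hD₁ : driftBound z (s - 1) ≤ driftBound z s := by
      linarith [expBound_pos (z := z) (s - 1)]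
    have hdrift := ih (s := s - 1) (by rw [sub_re, one_re]; linarith) (hD₁.trans hD)
    have hv : Un n (s - 1) w ∈ closedBall z (z.re / 2) := by
      rw [mem_closedBall]
      linarith [dist_triangle (Un n (s - 1) w) w z]
    have hexp := norm_cexp_mul_le_expBound (a := s - 1) (by rw [sub_re, one_re]; linarith) hv
    calc dist (Un (n + 1) s w) w
        ≤ dist (Un (n + 1) s w) (Un n (s - 1) w) + dist (Un n (s - 1) w) w := dist_triangle _ _ _
      _ ≤ expBound z (s - 1) + driftBound z (s - 1) := by
        rw [Un, dist_self_add_left]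
        exact add_le_add hexp hdrift
      _ = driftBound z s := by linarith

theorem dist_Un_le_three_mul_dist (hz : 0 < z.re) {s w : ℂ} (hs : s.re ≤ 1)
    (hD : driftBound z s ≤ z.re / 4) (n : ℕ) (hw : w ∈ ball z (z.re / 4)) :
    dist (Un n s w) (Un n s z) ≤ 3 * dist w z := by
  have hmaps :
      Set.MapsTo (Un n s) (ball z (z.re / 4)) (closedBall (Un n s z) (3 * (z.re / 4))) := by
    intro v hv
    rw [mem_ball] at hv
    have h₁ := dist_Un_le_driftBound hz hs hD hv.le n
    have h₂ := dist_Un_le_driftBound hz hs hD (by rw [dist_self]; positivity) n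
    rw [mem_closedBall]
    linarith [dist_triangle4 (Un n s v) v z (Un n s z), dist_comm z (Un n s z)]
  have := dist_le_div_mul_dist_of_mapsTo_ball
    (differentiable_Un_right n s).differentiableOn hmaps hw
  rwa [mul_div_cancel_right₀ _ (by positivity)] at this

def stableRegion (z : ℂ) : Set ℂ := {s | s.re < 1 ∧ driftBound z s < z.re / 4}

theorem dist_Un_succ_le (hz : 0 < z.re) {s : ℂ} (hs : s ∈ stableRegion z) (n : ℕ) :
    dist (Un n s z) (Un (n + 1) s z) ≤ 3 * (z.re / 4) * decay z ^ n := by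
  obtain ⟨hre, hD⟩ := hs
  set ε := cexp ((s - (n + 1)) * z)
  have hq := decay_lt_one hz
  have hε : ‖ε‖ ≤ driftBound z s * decay z ^ n := by
    have h := norm_cexp_mul_le_expBound (z := z) (a := s - (n + 1))
      (by simp only [sub_re, add_re, natCast_re, one_re]; linarith [n.cast_nonneg (α := ℝ)])
      (mem_closedBall_self (by positivity))
    have hD' : expBound z s * decay z ≤ driftBound z s :=
      le_div_self (mul_pos (expBound_pos s) decay_pos).le (sub_pos.2 hq)
        (by linarith [decay_pos (z := z)])
    have := expBound_sub_natCast (z := z) s (n + 1)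
    push_cast at this
    rw [this, pow_succ] at h
    calc ‖ε‖ ≤ expBound z s * decay z * decay z ^ n := by linarith
      _ ≤ driftBound z s * decay z ^ n := by gcongr; exact pow_nonneg decay_pos.le n
  have hεball : z + ε ∈ ball z (z.re / 4) := by
    rw [mem_ball, dist_self_add_left]
    calc ‖ε‖ ≤ driftBound z s * decay z ^ n := hε
      _ ≤ driftBound z s := mul_le_of_le_one_right (driftBound_nonneg hz s)
          (pow_le_one₀ decay_pos.le hq.le)
      _ < z.re / 4 := hD
  rw [Un_succ, dist_comm]
  calc dist (Un n s (z + ε)) (Un n s z) ≤ 3 * ‖ε‖ := by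
        simpa [dist_self_add_left] using dist_Un_le_three_mul_dist hz hre.le hD.le n hεball
    _ ≤ 3 * (z.re / 4) * decay z ^ n := by
        nlinarith [pow_nonneg (decay_pos (z := z)).le n]

lemma continuous_driftBound : Continuous (driftBound z) := by
  unfold driftBound expBound
  fun_prop

lemma isOpen_stableRegion : IsOpen (stableRegion z) :=
  (isOpen_lt continuous_re continuous_const).inter
    (isOpen_lt continuous_driftBound continuous_const)

lemma exists_sub_natCast_mem_stableRegion (hz : 0 < z.re) (s : ℂ) :
    ∃ m : ℕ, s - m ∈ stableRegion z := by
  have hD : ∀ᶠ m : ℕ in atTop, driftBound z s * decay z ^ m < z.re / 4 := by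
    refine Tendsto.eventually_lt_const (by positivity) ?_
    simpa using (tendsto_pow_atTop_nhds_zero_of_lt_one decay_pos.le (decay_lt_one hz)).const_mul
      (driftBound z s)
  obtain ⟨m, hm, hre⟩ :=
    (hD.and (tendsto_natCast_atTop_atTop.eventually_gt_atTop (s.re + 1))).exists
  exact ⟨m, by rw [sub_re, natCast_re]; linarith, by rwa [driftBound_sub_natCast]⟩

lemma tendsto_Un_of_tendsto_sub_natCast {s L : ℂ} (m : ℕ)
    (h : Tendsto (fun n => Un n (s - m) z) atTop (𝓝 L)) :
    Tendsto (fun n => Un n s z) atTop (𝓝 (Un m s L)) := by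
  refine (tendsto_add_atTop_iff_nat m).1 ?_
  simpa only [Un_add, Function.comp_def] using
    ((differentiable_Un_right m s).continuous.tendsto L).comp h

lemma exists_tendsto_Un (hz : 0 < z.re) (s : ℂ) :
    ∃ L, Tendsto (fun n => Un n s z) atTop (𝓝 L) := by
  obtain ⟨m, hm⟩ := exists_sub_natCast_mem_stableRegion hz s
  obtain ⟨L, hL⟩ := cauchySeq_tendsto_of_complete <|
    cauchySeq_of_le_geometric _ _ (decay_lt_one hz) (dist_Un_succ_le hz hm)
  exact ⟨_, tendsto_Un_of_tendsto_sub_natCast m hL⟩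

variable {U : ℂ → ℂ}

lemma differentiableOn_stableRegion_of_tendsto (hz : 0 < z.re)
    (hU : ∀ s, Tendsto (fun n => Un n s z) atTop (𝓝 (U s))) :
    DifferentiableOn ℂ U (stableRegion z) := by
  have hunif : TendstoUniformlyOn (fun n s => Un n s z) U atTop (stableRegion z) :=
    tendstoUniformlyOn_of_dist_le_geometric decay_pos.le (decay_lt_one hz)
      (fun _ hs => dist_Un_succ_le hz hs) (fun s _ => hU s)
  refine hunif.tendstoLocallyUniformlyOn.differentiableOn (Eventually.of_forall fun n => ?_)
    isOpen_stableRegion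
  exact (differentiable_Un n |>.comp <|
    differentiable_id.prodMk (differentiable_const z)).differentiableOn

lemma differentiable_of_tendsto (hz : 0 < z.re)
    (hU : ∀ s, Tendsto (fun n => Un n s z) atTop (𝓝 (U s))) : Differentiable ℂ U := by
  intro s
  obtain ⟨m, hm⟩ := exists_sub_natCast_mem_stableRegion hz s
  have hU_eq : U = fun t => Un m t (U (t - m)) :=
    funext fun t => tendsto_nhds_unique (hU t) (tendsto_Un_of_tendsto_sub_natCast m (hU (t - m)))
  have hUm : DifferentiableAt ℂ U (s - m) :=
    (differentiableOn_stableRegion_of_tendsto hz hU).differentiableAt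
      (isOpen_stableRegion.mem_nhds hm)
  rw [hU_eq]
  exact (differentiable_Un m _).comp s
    (differentiableAt_id.prodMk (hUm.comp s (differentiableAt_id.sub_const _)))

lemma sub_eq_cexp_of_tendsto (hU : ∀ s, Tendsto (fun n => Un n s z) atTop (𝓝 (U s)))
    (s : ℂ) : U (s + 1) - U s = cexp (s * U s) := by
  have h := (tendsto_add_atTop_iff_nat 1).2 (hU (s + 1))
  simp only [Un_succ_add_one] at h
  rw [tendsto_nhds_unique h ((hU s).add ((hU s).const_mul s).cexp)]
  ring

end

theorem stmt_7 (z : ℂ) (hz : 0 < z.re) :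
    ∃ U : ℂ → ℂ,
      (∀ s : ℂ, Tendsto (fun n => Un n s z) atTop (nhds (U s))) ∧
      Differentiable ℂ U ∧
      (∀ s : ℂ, U (s + 1) - U s = Complex.exp (s * U s)) := by
  choose U hU using exists_tendsto_Un hz
  exact ⟨U, hU, differentiable_of_tendsto hz hU, sub_eq_cexp_of_tendsto hU⟩
end

section
/- For fixed z with Re(z) > 0 and fixed s ∈ ℂ, U(s − n, z) → z as n → ∞ along natural numbers. -/
/-!
Let `δ = Re z / 2`. While an orbit point `w` stays within `δ` of `z`, we have `Re w ≥ δ` and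
`‖w‖ ≤ ‖z‖ + δ`, so a step with parameter `s - k` moves it by at most `exp (‖s‖ (‖z‖ + δ) - k δ)`.
Starting at parameter `s - m`, the steps have `k > m`, and for large `m` the sum of these bounds is
at most `δ`: the orbit never leaves the disc, and the resulting bound on `‖Un n (s - m) z - z‖`,
uniform in `n`, passes to the limit `U (s - m) z` and tends to `0` as `m → ∞`.
-/
open Complex Metric Filter Topology

/-- `∑_{k > m} exp (A - k δ)`, in closed form. -/
noncomputable def expTail (A δ : ℝ) (m : ℕ) : ℝ :=
  Real.exp (A - (m + 1) * δ) / (1 - Real.exp (-δ))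

section expTail

variable {A δ : ℝ}

lemma one_sub_exp_neg_pos (hδ : 0 < δ) : 0 < 1 - Real.exp (-δ) := by
  simpa using Real.exp_lt_one_iff.mpr (neg_lt_zero.mpr hδ)

lemma expTail_nonneg (hδ : 0 < δ) (m : ℕ) : 0 ≤ expTail A δ m :=
  div_nonneg (Real.exp_pos _).le (one_sub_exp_neg_pos hδ).le

lemma expTail_eq_exp_add (hδ : 0 < δ) (m : ℕ) :
    expTail A δ m = Real.exp (A - (m + 1) * δ) + expTail A δ (m + 1) := by
  have hexp :
      Real.exp (A - ((m + 1 : ℕ) + 1) * δ) = Real.exp (A - (m + 1) * δ) * Real.exp (-δ) := by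
    rw [← Real.exp_add]; push_cast; ring_nf
  have := (one_sub_exp_neg_pos hδ).ne'
  rw [expTail, expTail, hexp]
  field_simp
  ring

lemma tendsto_expTail (hδ : 0 < δ) : Tendsto (expTail A δ) atTop (𝓝 0) := by
  have hlin : Tendsto (fun m : ℕ => A - (m + 1) * δ) atTop atBot := by
    refine tendsto_atBot_add_const_left _ A (tendsto_neg_atTop_atBot.comp ?_)
    exact (tendsto_natCast_atTop_atTop.atTop_add tendsto_const_nhds).atTop_mul_const hδ
  have h := (Real.tendsto_exp_atBot.comp hlin).div_const (1 - Real.exp (-δ))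
  rwa [zero_div] at h

end expTail

lemma norm_exp_sub_mul_le (s w : ℂ) (k : ℝ) :
    ‖exp ((s - k) * w)‖ ≤ Real.exp (‖s‖ * ‖w‖ - k * w.re) := by
  rw [norm_exp, Real.exp_le_exp]
  have : ((s - k) * w).re = (s * w).re - k * w.re := by simp [mul_re]; ring
  rw [this, ← norm_mul]
  linarith [re_le_norm (s * w)]

lemma Un_succ_sub_natCast (n m : ℕ) (s z : ℂ) :
    Un (n + 1) (s - m) z =
      Un n (s - (m + 1 : ℕ)) z + exp ((s - (m + 1 : ℕ)) * Un n (s - (m + 1 : ℕ)) z) := by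
  rw [Un]; push_cast; ring_nf

lemma norm_Un_sub_natCast_sub_le {s z : ℂ} {δ : ℝ} {M : ℕ} (hδ : 0 < δ) (hδz : 2 * δ ≤ z.re)
    (hM : ∀ m ≥ M, expTail (‖s‖ * (‖z‖ + δ)) δ m ≤ δ) (n : ℕ) :
    ∀ m ≥ M, ‖Un n (s - m) z - z‖ ≤ expTail (‖s‖ * (‖z‖ + δ)) δ m := by
  induction n with
  | zero => intro m _; simpa [Un] using expTail_nonneg hδ m
  | succ n ih =>
    intro m hm
    set w := Un n (s - (m + 1 : ℕ)) z
    have hwz : ‖w - z‖ ≤ expTail (‖s‖ * (‖z‖ + δ)) δ (m + 1) := ih (m + 1) (by omega)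
    have hwz' : ‖w - z‖ ≤ δ := hwz.trans (hM (m + 1) (by omega))
    have hw_norm : ‖w‖ ≤ ‖z‖ + δ := by
      linarith [norm_le_norm_add_norm_sub' w z]
    have hw_re : δ ≤ w.re := by
      linarith [neg_abs_le (w - z).re, abs_re_le_norm (w - z), sub_re w z]
    have hstep : ‖exp ((s - (m + 1 : ℕ)) * w)‖ ≤ Real.exp (‖s‖ * (‖z‖ + δ) - (m + 1) * δ) := by
      refine (norm_exp_sub_mul_le s w (m + 1 : ℕ)).trans (Real.exp_le_exp.mpr ?_)
      push_cast
      gcongr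
    calc ‖Un (n + 1) (s - m) z - z‖ = ‖(w - z) + exp ((s - (m + 1 : ℕ)) * w)‖ := by
          rw [Un_succ_sub_natCast, add_sub_right_comm]
      _ ≤ ‖w - z‖ + ‖exp ((s - (m + 1 : ℕ)) * w)‖ := norm_add_le _ _
      _ ≤ expTail (‖s‖ * (‖z‖ + δ)) δ m := by
          rw [expTail_eq_exp_add hδ m]; linarith

theorem stmt_10 (z : ℂ) (hz : 0 < z.re) (s : ℂ) (U : ℂ → ℂ → ℂ)
    (hU : ∀ (s w : ℂ), 0 < w.re → Tendsto (fun n => Un n s w) atTop (nhds (U s w))) :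
    Tendsto (fun n : ℕ => U (s - (n : ℂ)) z) atTop (nhds z) := by
  set δ := z.re / 2
  have hδ : 0 < δ := half_pos hz
  have htail := tendsto_expTail (A := ‖s‖ * (‖z‖ + δ)) hδ
  obtain ⟨M, hM⟩ := eventually_atTop.mp (htail.eventually_le_const hδ)
  have hU_near : ∀ m ≥ M, dist (U (s - m) z) z ≤ expTail (‖s‖ * (‖z‖ + δ)) δ m := fun m hm =>
    le_of_tendsto ((hU _ z hz).dist tendsto_const_nhds) <| .of_forall fun n => by
      simpa [dist_eq] using norm_Un_sub_natCast_sub_le hδ (by simp only [δ]; linarith) hM n m hm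
  rw [tendsto_iff_dist_tendsto_zero]
  exact squeeze_zero' (.of_forall fun _ => dist_nonneg) (eventually_atTop.mpr ⟨M, hU_near⟩) htail
end

section
/- Fix z with Re(z) > 0. Then U(s,z) → z as |s| → ∞ within any closed subsector π/2 < κ ≤ |arg(sz)| ≤ π. -/
open Complex Metric Filter Topology

/-! Write `q = exp (Re (s z) / 2)` and `ρ = exp (Re z / 2)`, so that replacing `s` by `s - 1`
divides `q` by `ρ`. The conditions `e q ≤ ρ - 1` and `‖s‖ q ≤ 1` survive this shift, and under them
induction on `n` gives `‖Un n s z - z‖ ≤ q`: if the inner composition `w = Un n (s - 1) z` is within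
`q' = q / ρ` of `z`, then `‖s - 1‖ q' ≤ 1` bounds the outermost increment `exp ((s - 1) w)` by
`e q'²`, and `q' + e q'² ≤ q' ρ = q`. In the sector `Re (s z) ≤ -c ‖s‖ ‖z‖` with
`c = -cos (min κ π) > 0`, so `q` decays exponentially in `‖s‖`, both conditions hold for large
`‖s‖`, and the bound passes to the limit `U`. -/

lemma exp_half_re_sub_one_mul (s z : ℂ) :
    Real.exp (((s - 1) * z).re / 2) * Real.exp (z.re / 2) = Real.exp ((s * z).re / 2) := by
  rw [← Real.exp_add]
  congr 1
  simp only [sub_mul, one_mul, sub_re]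
  ring

lemma norm_exp_mul_le (a w z : ℂ) :
    ‖exp (a * w)‖ ≤ Real.exp ((a * z).re + ‖a‖ * ‖w - z‖) := by
  rw [norm_exp, Real.exp_le_exp, show a * w = a * z + a * (w - z) by ring, add_re, ← norm_mul]
  exact add_le_add le_rfl (re_le_norm _)

lemma norm_Un_sub_le (n : ℕ) {s z : ℂ}
    (hq : Real.exp 1 * Real.exp ((s * z).re / 2) ≤ Real.exp (z.re / 2) - 1)
    (hsq : ‖s‖ * Real.exp ((s * z).re / 2) ≤ 1) :
    ‖Un n s z - z‖ ≤ Real.exp ((s * z).re / 2) := by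
  induction n generalizing s with
  | zero => rw [Un, sub_self, norm_zero]; positivity
  | succ n ih =>
    set q := Real.exp ((s * z).re / 2)
    set q' := Real.exp (((s - 1) * z).re / 2)
    set ρ := Real.exp (z.re / 2)
    have hq'ρ : q' * ρ = q := exp_half_re_sub_one_mul s z
    have hq'_pos : 0 < q' := Real.exp_pos _
    have he : 1 ≤ Real.exp 1 := Real.one_le_exp zero_le_one
    have hρ : 1 ≤ ρ := by nlinarith [Real.exp_pos ((s * z).re / 2)]
    have hq' : q' ≤ q := by nlinarith
    have hq'_shift : Real.exp 1 * q' ≤ ρ - 1 := le_trans (by gcongr) hq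
    have hsq'_shift : ‖s - 1‖ * q' ≤ 1 := by
      refine le_of_mul_le_mul_right (a := ρ) ?_ (by positivity)
      calc ‖s - 1‖ * q' * ρ = ‖s - 1‖ * q := by rw [mul_assoc, hq'ρ]
        _ ≤ (‖s‖ + 1) * q := by gcongr; simpa using norm_sub_le s 1
        _ ≤ 1 * ρ := by nlinarith
    have hw := ih hq'_shift hsq'_shift
    have hexp : ‖exp ((s - 1) * Un n (s - 1) z)‖ ≤ Real.exp 1 * q' ^ 2 :=
      calc ‖exp ((s - 1) * Un n (s - 1) z)‖
          ≤ Real.exp (((s - 1) * z).re + ‖s - 1‖ * ‖Un n (s - 1) z - z‖) := norm_exp_mul_le _ _ _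
        _ ≤ Real.exp (((s - 1) * z).re + 1) := by
          gcongr
          exact le_trans (mul_le_mul_of_nonneg_left hw (norm_nonneg _)) hsq'_shift
        _ = Real.exp 1 * q' ^ 2 := by
          rw [sq, ← Real.exp_add, ← Real.exp_add]; ring_nf
    calc ‖Un (n + 1) s z - z‖
        = ‖(Un n (s - 1) z - z) + exp ((s - 1) * Un n (s - 1) z)‖ := by rw [Un]; ring_nf
      _ ≤ q' + Real.exp 1 * q' ^ 2 := (norm_add_le _ _).trans (add_le_add hw hexp)
      _ ≤ q := by nlinarith

lemma re_le_neg_mul_norm_of_le_abs_arg {κ : ℝ} (hκ : Real.pi / 2 < κ) :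
    ∃ c > 0, ∀ w : ℂ, κ ≤ |w.arg| → w.re ≤ -(c * ‖w‖) := by
  set κ' := min κ Real.pi
  have hκ' : Real.pi / 2 < κ' := lt_min hκ (by linarith [Real.pi_pos])
  have hcosκ' : Real.cos κ' < 0 := Real.cos_neg_of_pi_div_two_lt_of_lt hκ'
    ((min_le_right _ _).trans_lt (by linarith [Real.pi_pos]))
  refine ⟨-Real.cos κ', neg_pos.mpr hcosκ', fun w hw => ?_⟩
  have hcos : Real.cos w.arg ≤ Real.cos κ' := by
    rw [← Real.cos_abs]
    exact Real.cos_le_cos_of_nonneg_of_le_pi (by linarith [Real.pi_pos]) (abs_arg_le_pi w)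
      ((min_le_left _ _).trans hw)
  rw [← norm_mul_cos_arg w]
  nlinarith [norm_nonneg w]

lemma tendsto_mul_exp_neg_mul_atTop {β : ℝ} (hβ : 0 < β) :
    Tendsto (fun r : ℝ => r * Real.exp (-(β * r))) atTop (𝓝 0) := by
  have h := ((Real.tendsto_pow_mul_exp_neg_atTop_nhds_zero 1).comp
    (tendsto_id.const_mul_atTop hβ)).const_mul β⁻¹
  rw [mul_zero] at h
  refine h.congr fun r => ?_
  field_simp
  simp

theorem stmt_11 (z : ℂ) (hz : 0 < z.re) (U : ℂ → ℂ → ℂ)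
    (hU : ∀ (s w : ℂ), 0 < w.re → Tendsto (fun n => Un n s w) atTop (nhds (U s w))) :
    ∀ κ : ℝ, Real.pi / 2 < κ →
      ∀ ε > (0 : ℝ), ∃ R : ℝ, ∀ s : ℂ,
        κ ≤ |(s * z).arg| → R ≤ ‖s‖ → ‖U s z - z‖ < ε := by
  intro κ hκ ε hε
  obtain ⟨c, hc, hsector⟩ := re_le_neg_mul_norm_of_le_abs_arg hκ
  have hz0 : 0 < ‖z‖ := norm_pos_iff.mpr fun h => by simp [h] at hz
  set β := c * ‖z‖ / 2 with hβ_def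
  have hβ : 0 < β := by positivity
  have hρ : 0 < Real.exp (z.re / 2) - 1 := by linarith [Real.add_one_le_exp (z.re / 2)]
  have hdecay : Tendsto (fun r : ℝ => Real.exp (-(β * r))) atTop (𝓝 0) :=
    Real.tendsto_exp_neg_atTop_nhds_zero.comp (tendsto_id.const_mul_atTop hβ)
  obtain ⟨R, hR⟩ := eventually_atTop.mp
    (((hdecay.const_mul (Real.exp 1)).eventually (ge_mem_nhds (by rwa [mul_zero]))).and
      (((tendsto_mul_exp_neg_mul_atTop hβ).eventually (ge_mem_nhds zero_lt_one)).and
        (hdecay.eventually (gt_mem_nhds hε))))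
  refine ⟨R, fun s harg hsR => ?_⟩
  obtain ⟨h_shift, h_norm, h_eps⟩ := hR ‖s‖ hsR
  have hq : Real.exp ((s * z).re / 2) ≤ Real.exp (-(β * ‖s‖)) := by
    have := hsector _ harg
    rw [norm_mul] at this
    exact Real.exp_le_exp.mpr (by rw [hβ_def]; linarith)
  have hUn : ∀ n, ‖Un n s z - z‖ ≤ Real.exp ((s * z).re / 2) := fun n =>
    norm_Un_sub_le n (h_shift.trans' (by gcongr))
      (h_norm.trans' (mul_le_mul_of_nonneg_left hq (norm_nonneg s)))
  have hUz : ‖U s z - z‖ ≤ Real.exp ((s * z).re / 2) :=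
    le_of_tendsto ((hU s z hz).sub_const z).norm (Eventually.of_forall hUn)
  linarith
end
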